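/- For every choice of (a,b) ∈ {2,3}^2, the 5×5 symmetric matrix with rows (0,1,2,a,1),(1,0,1,2,1),(2,1,0,1,2),(a,2,1,0,b),(1,1,2,b,0) has second largest eigenvalue strictly greater than (17-√329)/2. -/

import Mathlib

noncomputable def sortedEigenvalues {ι : Type*} [Fintype ι] [DecidableEq ι]
    (A : Matrix ι ι ℝ) (hA : A.IsHermitian) : List ℝ :=
  (Finset.univ.val.map hA.eigenvalues).sort (· ≤ ·)

/-- `eig A hA k` is the `k`-th largest eigenvalue of `A` (1-indexed). -/
noncomputable def eig {ι : Type*} [Fintype ι] [DecidableEq ι]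
    (A : Matrix ι ι ℝ) (hA : A.IsHermitian) (k : ℕ) : ℝ :=
  (sortedEigenvalues A hA)[Fintype.card ι - k]!

/-!
If `λ₂ ≤ c`, every eigenvalue but the largest is at most `c`, while the largest is at least
`tr A / n ≥ c`; so `χ_A(c) = ∏ (c - λᵢ) ≤ 0`. Hence `χ_A(c) > 0` forces `λ₂ > c`.
For the four matrices, `θ = (17 - √329)/2` is a root of `c² - 17c - 10`, so `χ(θ)` reduces to
a linear expression in `θ`, whose sign follows from a rational lower bound on `θ`.
-/

open Matrix Polynomial

theorem List.lt_getElem!_length_sub_two_of_prod_pos {l : List ℝ} {c : ℝ} (hne : l ≠ [])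
    (hl : l.Pairwise (· ≤ ·)) (hsum : l.length * c ≤ l.sum)
    (hprod : 0 < (l.map (c - ·)).prod) : c < l[l.length - 2]! := by
  obtain ⟨l', x, rfl⟩ : ∃ l' x, l = l' ++ [x] := by
    simpa using (List.eq_nil_or_concat l).resolve_left hne
  by_contra! hle
  have hx : ∀ y ∈ l' ++ [x], y ≤ x := by
    simpa [or_imp, forall_and] using (List.pairwise_append.mp hl).2.2
  have hcx : c ≤ x := by
    have := List.sum_le_card_nsmul _ x hx
    rw [nsmul_eq_mul] at this
    exact le_of_mul_le_mul_left (hsum.trans this) (by simp; positivity)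
  have hl'c : ∀ y ∈ l', y ≤ c := by
    intro y hy
    obtain ⟨i, hi, rfl⟩ := List.mem_iff_getElem.mp hy
    have hidx : (l' ++ [x]).length - 2 < (l' ++ [x]).length := by simp
    rw [getElem!_pos (l' ++ [x]) _ hidx] at hle
    refine le_trans ?_ hle
    calc l'[i] = (l' ++ [x])[i]'(by simp; omega) := (List.getElem_append_left hi).symm
      _ ≤ _ := List.sortedLE_iff_getElem_le_getElem_of_le.mp hl.sortedLE (by simp; omega)
  have hprod_nonpos : (l'.map (c - ·)).prod * (c - x) ≤ 0 :=
    mul_nonpos_of_nonneg_of_nonpos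
      (List.prod_nonneg (by simpa only [List.forall_mem_map, sub_nonneg])) (by linarith)
  simp only [List.map_append, List.prod_append, List.map_singleton, List.prod_singleton] at hprod
  linarith

theorem lt_eig_two_of_eval_charpoly_pos {ι : Type*} [Fintype ι] [DecidableEq ι] [Nonempty ι]
    {A : Matrix ι ι ℝ} (hA : A.IsHermitian) {c : ℝ} (htr : Fintype.card ι * c ≤ A.trace)
    (hc : 0 < A.charpoly.eval c) : c < eig A hA 2 := by
  have hcoe : (sortedEigenvalues A hA : Multiset ℝ) = Finset.univ.val.map hA.eigenvalues :=
    Multiset.sort_eq _ _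
  have hlen : (sortedEigenvalues A hA).length = Fintype.card ι := by
    simpa using congrArg Multiset.card hcoe
  unfold eig
  rw [← hlen]
  refine List.lt_getElem!_length_sub_two_of_prod_pos ?_ (Multiset.pairwise_sort _ _) ?_ ?_
  · simp [← List.length_pos_iff, hlen, Fintype.card_pos]
  · rw [hlen, ← Multiset.sum_coe, hcoe]
    simpa [hA.trace_eq_sum_eigenvalues] using htr
  · rw [← Multiset.prod_coe, ← Multiset.map_coe, hcoe, Multiset.map_map]
    simpa [hA.charpoly_eq, eval_prod] using hc

def h3DistMatrix (a b : ℝ) : Matrix (Fin 5) (Fin 5) ℝ :=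
  !![0, 1, 2, a, 1; 1, 0, 1, 2, 1; 2, 1, 0, 1, 2; a, 2, 1, 0, b; 1, 1, 2, b, 0]

theorem eval_charpoly_h3DistMatrix (a b c : ℝ) :
    (h3DistMatrix a b).charpoly.eval c =
      c ^ 5 - (17 + a ^ 2 + b ^ 2) * c ^ 3 - (22 + 8 * a + 8 * b + 2 * a * b) * c ^ 2
        + (16 - 18 * a - 18 * b - 10 * a * b + 6 * a ^ 2 + 6 * b ^ 2) * c
        + (22 - 10 * a - 10 * b - 6 * a * b + 4 * a ^ 2 + 4 * b ^ 2) := by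
  rw [eval_charpoly]
  simp [h3DistMatrix, det_succ_row_zero, Fin.sum_univ_succ, Fin.succAbove]
  ring

/-- The bound `-2855/5016` is the zero of the linear remainder for `a = b = 3`; at
`c = (17 - √329)/2` that case has `χ(c) ≈ 0.0044` only. -/
theorem eval_charpoly_h3DistMatrix_pos {a b c : ℝ} (ha : a = 2 ∨ a = 3) (hb : b = 2 ∨ b = 3)
    (hc : c ^ 2 = 17 * c + 10) (hc_gt : -2855 / 5016 < c) :
    0 < (h3DistMatrix a b).charpoly.eval c := by
  have hrem : (h3DistMatrix a b).charpoly.eval c =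
      -((166 * (a ^ 2 + b ^ 2) + 90 * (a + b) + 26 * a * b - 49442)
        + (293 * (a ^ 2 + b ^ 2) + 154 * (a + b) + 44 * a * b - 86850) * c) := by
    rw [eval_charpoly_h3DistMatrix]
    linear_combination (c ^ 3 + 17 * c ^ 2 - (a ^ 2 + b ^ 2 - 282) * c
      - (17 * (a ^ 2 + b ^ 2) + 8 * (a + b) + 2 * a * b - 4942)) * hc
  rw [hrem]
  rcases ha with rfl | rfl <;> rcases hb with rfl | rfl <;> linarith

theorem forbidden_H3_submatrices (a b : ℝ)
    (ha : a = 2 ∨ a = 3) (hb : b = 2 ∨ b = 3)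
    (h : (!![(0:ℝ),1,2,a,1;1,0,1,2,1;2,1,0,1,2;a,2,1,0,b;1,1,2,b,0]).IsHermitian) :
    eig _ h 2 > (17 - Real.sqrt 329) / 2 := by
  have hsq : √329 ^ 2 = 329 := Real.sq_sqrt (by norm_num)
  have h17 : 17 < √329 := (Real.lt_sqrt (by norm_num)).mpr (by norm_num)
  have hupper : √329 < 45491 / 2508 := (Real.sqrt_lt' (by norm_num)).mpr (by norm_num)
  refine lt_eig_two_of_eval_charpoly_pos h ?_ (eval_charpoly_h3DistMatrix_pos ha hb ?_ ?_)
  · have h5θ_nonpos : (5 : ℝ) * ((17 - √329) / 2) ≤ 0 := by linarith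
    simpa [Matrix.trace, Fin.sum_univ_five] using h5θ_nonpos
  · linear_combination hsq / 4
  · linarith
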